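/- For every λ ∈ ℂ with λ ≠ 1, every integer n ≥ 1, every a ∈ ℤ_{≥0}, every b ∈ ℂ with b ≠ 0, and all x, the identity (x - bn)^{n-1} = Σ_{l=0}^{an} Σ_{k=0}^{n-1-l} Σ_{j=0}^{k} ( C(an, l) · C(k, j) · ((n-1)_{k+l}/k!) / ( C(j+l, l) · (1-λ)^{l} ) ) · S₂(j+l, l) · (-1)^{k-j} · (nb)^{k-j} · H_{n-1-l-k}^{(an)}(x|λ) holds as an identity of polynomials in x, where (m)_r = m(m-1)⋯(m-r+1) denotes the falling factorial. -/

import Mathlib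

/-! Write `e^t - λ = (e^t - 1) + (1 - λ)` and expand `(e^t - λ)^α` binomially, turning each
`(e^t - 1)^l` into `l! ∑_i S₂(i,l) tⁱ/i!`, a series divisible by `t^l`. Multiplying the
generating function of `H_m^{(α)}(x|λ)` by this expansion and by `e^{-nbt}` gives
`(1-λ)^α e^{(x-nb)t}`, and comparing coefficients of `t^{n-1}` yields the identity. -/

/-- The formal power series `e^{ct} = ∑_{m≥0} c^m t^m / m!` over `ℂ`. -/
noncomputable def expPS (c : ℂ) : PowerSeries ℂ :=
  PowerSeries.mk fun m => c ^ m / (m.factorial : ℂ)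

open PowerSeries
open Finset (range sum_congr sum_mul mul_sum)

lemma expPS_eq_rescale_exp (c : ℂ) : expPS c = rescale c (exp ℂ) := by
  ext m
  rw [coeff_rescale, coeff_exp, expPS, coeff_mk]
  push_cast
  ring

lemma expPS_mul_expPS (c d : ℂ) : expPS c * expPS d = expPS (c + d) := by
  simp only [expPS_eq_rescale_exp, exp_mul_exp_eq_exp_add]

lemma X_dvd_expPS_sub_one (c : ℂ) : X ∣ expPS c - 1 := by
  rw [X_dvd_iff, map_sub, map_one, ← coeff_zero_eq_constantCoeff_apply, expPS, coeff_mk]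
  simp

lemma coeff_mk_mul_mk_mul_mk {R : Type*} [CommSemiring R] (f g h : ℕ → R) (N : ℕ) :
    coeff N (mk f * mk g * mk h) =
      ∑ k ∈ range (N + 1), ∑ j ∈ range (k + 1), f j * g (k - j) * h (N - k) := by
  rw [coeff_mul, Finset.Nat.sum_antidiagonal_eq_sum_range_succ
    (fun k i => coeff k (mk f * mk g) * coeff i (mk h))]
  refine sum_congr rfl fun k _ => ?_
  rw [coeff_mul, Finset.Nat.sum_antidiagonal_eq_sum_range_succ
    (fun j i => coeff j (mk f) * coeff i (mk g)), sum_mul]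
  simp only [coeff_mk]

lemma stirlingSeries_eq_X_pow_mul (S2 : ℕ → ℕ → ℂ) (m : ℕ)
    (hS2 : (expPS 1 - 1) ^ m = C (m.factorial : ℂ) * mk (fun l => S2 l m / (l.factorial : ℂ))) :
    mk (fun i => S2 i m / (i.factorial : ℂ)) =
      X ^ m * mk (fun j => S2 (j + m) m / ((j + m).factorial : ℂ)) := by
  ext i
  rw [coeff_X_pow_mul', coeff_mk]
  split_ifs with hmi
  · rw [coeff_mk, Nat.sub_add_cancel hmi]
  · have hvanish : coeff i ((expPS 1 - 1) ^ m) = 0 :=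
      X_pow_dvd_iff.mp (pow_dvd_pow_of_dvd (X_dvd_expPS_sub_one 1) m) i (not_le.mp hmi)
    rw [hS2, coeff_C_mul, coeff_mk] at hvanish
    exact (mul_eq_zero.mp hvanish).resolve_left (Nat.cast_ne_zero.mpr m.factorial_ne_zero)

lemma expPS_sub_C_pow (lam : ℂ) (S2 : ℕ → ℕ → ℂ)
    (hS2 : ∀ m : ℕ, (expPS 1 - 1) ^ m =
      C (m.factorial : ℂ) * mk (fun l => S2 l m / (l.factorial : ℂ))) (α : ℕ) :
    (expPS 1 - C lam) ^ α =
      ∑ l ∈ range (α + 1), C ((1 - lam) ^ (α - l) * (α.choose l : ℂ) * (l.factorial : ℂ)) *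
        (X ^ l * mk (fun j => S2 (j + l) l / ((j + l).factorial : ℂ))) := by
  rw [show expPS 1 - C lam = (expPS 1 - 1) + C (1 - lam) by rw [map_sub, map_one]; ring, add_pow]
  refine sum_congr rfl fun l _ => ?_
  rw [hS2, ← stirlingSeries_eq_X_pow_mul S2 l (hS2 l), ← map_pow, ← map_natCast C, map_mul, map_mul]
  ring

lemma C_pow_mul_expPS_add (lam x c : ℂ) (α : ℕ) (h : ℕ → ℂ)
    (hh : (expPS 1 - C lam) ^ α * mk (fun m => h m / (m.factorial : ℂ)) =
      C (1 - lam) ^ α * expPS x)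
    (S2 : ℕ → ℕ → ℂ)
    (hS2 : ∀ m : ℕ, (expPS 1 - 1) ^ m =
      C (m.factorial : ℂ) * mk (fun l => S2 l m / (l.factorial : ℂ))) :
    C ((1 - lam) ^ α) * expPS (x + c) =
      ∑ l ∈ range (α + 1), C ((1 - lam) ^ (α - l) * (α.choose l : ℂ) * (l.factorial : ℂ)) *
        (X ^ l * (mk (fun j => S2 (j + l) l / ((j + l).factorial : ℂ)) * expPS c *
          mk (fun m => h m / (m.factorial : ℂ)))) := by
  rw [← expPS_mul_expPS, map_pow, ← mul_assoc, ← hh, expPS_sub_C_pow lam S2 hS2, sum_mul, sum_mul]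
  exact sum_congr rfl fun l _ => by ring

lemma choose_mul_descFactorial_div_choose {K : Type*} [Field K] [CharZero K]
    {M l k j : ℕ} (hlk : l + k ≤ M) (hjk : j ≤ k) :
    (k.choose j : K) * ((M.descFactorial (k + l) : K) / (k.factorial : K)) /
        ((j + l).choose l : K) =
      (M.factorial : K) * (l.factorial : K) /
        (((j + l).factorial : K) * ((k - j).factorial : K) * ((M - l - k).factorial : K)) := by
  have hk : (k.choose j : K) * j.factorial * (k - j).factorial = k.factorial := by
    exact_mod_cast Nat.choose_mul_factorial_mul_factorial hjk
  have hjl : ((j + l).choose l : K) * l.factorial * j.factorial = (j + l).factorial := by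
    exact_mod_cast (Nat.add_sub_cancel j l ▸ Nat.choose_mul_factorial_mul_factorial
      (Nat.le_add_left l j))
  have hM : ((M - l - k).factorial : K) * M.descFactorial (k + l) = M.factorial := by
    rw [show M - l - k = M - (k + l) by omega]
    exact_mod_cast Nat.factorial_mul_descFactorial (by omega)
  have hchoose : ((j + l).choose l : K) ≠ 0 := Nat.cast_ne_zero.mpr (Nat.choose_pos (by omega)).ne'
  have hchoose' : (k.choose j : K) ≠ 0 := Nat.cast_ne_zero.mpr (Nat.choose_pos hjk).ne'
  have hfac (m : ℕ) : (m.factorial : K) ≠ 0 := Nat.cast_ne_zero.mpr m.factorial_ne_zero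
  have := hfac j; have := hfac l; have := hfac (k - j); have := hfac (M - l - k)
  rw [← hk, ← hjl, ← hM]
  field_simp

lemma expPS_neg_eq_mk (c : ℂ) :
    expPS (-c) = mk fun m => (-1) ^ m * c ^ m / (m.factorial : ℂ) := by
  ext m
  rw [expPS, coeff_mk, coeff_mk, neg_pow]

lemma coeff_binomial_term (lam c : ℂ) (hlam : lam ≠ 1) (S2 : ℕ → ℕ → ℂ) (h : ℕ → ℂ)
    {M α l : ℕ} (hl : l ≤ α) :
    (M.factorial : ℂ) / (1 - lam) ^ α *
        coeff M (C ((1 - lam) ^ (α - l) * (α.choose l : ℂ) * (l.factorial : ℂ)) *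
          (X ^ l * (mk (fun j => S2 (j + l) l / ((j + l).factorial : ℂ)) * expPS (-c) *
            mk (fun m => h m / (m.factorial : ℂ))))) =
      ∑ k ∈ range (M - l + 1), ∑ j ∈ range (k + 1),
        (α.choose l : ℂ) * (k.choose j : ℂ) *
            ((M.descFactorial (k + l) : ℂ) / (k.factorial : ℂ)) /
            (((j + l).choose l : ℂ) * (1 - lam) ^ l) *
          S2 (j + l) l * (-1) ^ (k - j) * c ^ (k - j) * h (M - l - k) := by
  rw [coeff_C_mul, coeff_X_pow_mul']
  split_ifs with hlM
  · have hlam' : 1 - lam ≠ 0 := sub_ne_zero.mpr hlam.symm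
    rw [expPS_neg_eq_mk, coeff_mk_mul_mk_mul_mk, mul_sum, mul_sum]
    refine sum_congr rfl fun k hk => ?_
    rw [mul_sum, mul_sum]
    refine sum_congr rfl fun j hj => ?_
    have hlk : l + k ≤ M := by simp only [Finset.mem_range] at hk; omega
    have hjk : j ≤ k := by simp only [Finset.mem_range] at hj; omega
    have hfac (m : ℕ) : (m.factorial : ℂ) ≠ 0 := Nat.cast_ne_zero.mpr m.factorial_ne_zero
    calc _ = (α.choose l : ℂ) / (1 - lam) ^ l *
            ((M.factorial : ℂ) * l.factorial /
              ((j + l).factorial * (k - j).factorial * (M - l - k).factorial)) *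
            S2 (j + l) l * (-1) ^ (k - j) * c ^ (k - j) * h (M - l - k) := by
          rw [← pow_mul_pow_sub _ hl, Nat.sub_sub]
          have := hfac (j + l); have := hfac (k - j); have := hfac (M - (l + k))
          field_simp
      _ = _ := by
          rw [← choose_mul_descFactorial_div_choose hlk hjk]
          ring
  · rw [show M - l = 0 by omega]
    simp [Nat.descFactorial_eq_zero_iff_lt.mpr (not_le.mp hlM)]

theorem stmt8_general (lam : ℂ) (hlam : lam ≠ 1) (n : ℕ) (a : ℕ) (b : ℂ)
    (H : ℕ → ℕ → ℂ → ℂ)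
    (hH : ∀ (α : ℕ) (x : ℂ),
      (expPS 1 - PowerSeries.C lam) ^ α *
          PowerSeries.mk (fun m => H α m x / (m.factorial : ℂ)) =
        PowerSeries.C (1 - lam) ^ α * expPS x)
    (S2 : ℕ → ℕ → ℂ)
    (hS2 : ∀ m : ℕ,
      (expPS 1 - 1) ^ m =
        PowerSeries.C (m.factorial : ℂ) *
          PowerSeries.mk (fun l => S2 l m / (l.factorial : ℂ))) :
    ∀ x : ℂ,
      (x - b * n) ^ (n - 1) =
        ∑ l ∈ Finset.range (a * n + 1), ∑ k ∈ Finset.range (n - 1 - l + 1),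
          ∑ j ∈ Finset.range (k + 1),
            ((a * n).choose l : ℂ) * (k.choose j : ℂ) *
                (((n - 1).descFactorial (k + l) : ℂ) / (k.factorial : ℂ)) /
                (((j + l).choose l : ℂ) * (1 - lam) ^ l) *
              S2 (j + l) l * (-1) ^ (k - j) * ((n : ℂ) * b) ^ (k - j) *
              H (a * n) (n - 1 - l - k) x := by
  intro x
  have hlam' : (1 - lam) ^ (a * n) ≠ 0 := pow_ne_zero _ (sub_ne_zero.mpr hlam.symm)
  calc (x - b * n) ^ (n - 1)
      = ((n - 1).factorial : ℂ) / (1 - lam) ^ (a * n) *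
          coeff (n - 1) (C ((1 - lam) ^ (a * n)) * expPS (x + -(n * b))) := by
        rw [coeff_C_mul, expPS, coeff_mk, show x + -(n * b) = x - b * n by ring]
        have := Nat.cast_ne_zero (R := ℂ) |>.mpr (n - 1).factorial_ne_zero
        field_simp
    _ = _ := by
        rw [C_pow_mul_expPS_add lam x _ (a * n) _ (hH (a * n) x) S2 hS2, map_sum, mul_sum]
        exact sum_congr rfl fun l hl =>
          coeff_binomial_term lam _ hlam S2 _ (Nat.lt_succ_iff.mp (Finset.mem_range.mp hl))

/-- For `λ ≠ 1`, `n ≥ 1`, `a ∈ ℤ_{≥0}`, `b ≠ 0` and all `x`,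
`(x - bn)^{n-1} = ∑_{l=0}^{an} ∑_{k=0}^{n-1-l} ∑_{j=0}^{k}
  (C(an,l) C(k,j) ((n-1)_{k+l}/k!) / (C(j+l,l) (1-λ)^l))
  S₂(j+l,l) (-1)^{k-j} (nb)^{k-j} H_{n-1-l-k}^{(an)}(x|λ)`,
where `(m)_r` is the falling factorial. Here `H_m^{(α)}(x|λ)` is characterized by
`((1-λ)/(e^t-λ))^α e^{xt} = ∑_m H_m^{(α)}(x|λ) t^m/m!` and the Stirling numbers of the
second kind `S₂(l,m)` by `(e^t-1)^m = m! ∑_l S₂(l,m) t^l/l!`. -/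
theorem stmt8 (lam : ℂ) (hlam : lam ≠ 1) (n : ℕ) (hn : 1 ≤ n) (a : ℕ) (b : ℂ) (hb : b ≠ 0)
    (H : ℕ → ℕ → ℂ → ℂ)
    (hH : ∀ (α : ℕ) (x : ℂ),
      (expPS 1 - PowerSeries.C lam) ^ α *
          PowerSeries.mk (fun m => H α m x / (m.factorial : ℂ)) =
        PowerSeries.C (1 - lam) ^ α * expPS x)
    (S2 : ℕ → ℕ → ℂ)
    (hS2 : ∀ m : ℕ,
      (expPS 1 - 1) ^ m =
        PowerSeries.C (m.factorial : ℂ) *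
          PowerSeries.mk (fun l => S2 l m / (l.factorial : ℂ))) :
    ∀ x : ℂ,
      (x - b * n) ^ (n - 1) =
        ∑ l ∈ Finset.range (a * n + 1), ∑ k ∈ Finset.range (n - 1 - l + 1),
          ∑ j ∈ Finset.range (k + 1),
            ((a * n).choose l : ℂ) * (k.choose j : ℂ) *
                (((n - 1).descFactorial (k + l) : ℂ) / (k.factorial : ℂ)) /
                (((j + l).choose l : ℂ) * (1 - lam) ^ l) *
              S2 (j + l) l * (-1) ^ (k - j) * ((n : ℂ) * b) ^ (k - j) *
              H (a * n) (n - 1 - l - k) x :=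
  stmt8_general lam hlam n a b H hH S2 hS2
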